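/- arXiv:1707.03137 — 3 statements merged into one kernel-verified Lean document; each statement's English description precedes it below -/
import Mathlib

section
/- Let V be a finite-dimensional real inner product space and let C, C' be convex cones in V with closure of C' contained in the closure of C minus C (i.e., C' ⊆ cl(C) \ C). Then the dimension of the linear span of C' is strictly less than the dimension of the linear span of C, provided C is nonempty and open in its span. -/
/-!
If the spans were equal, a point `x ∈ C` would lie in `span C' = C' - C'`, say `x = a - b`.
An open convex cone absorbs its closure additively (`y + z` is twice the midpoint of `y` and `z`,
which lies in the interior), so `a = x + b ∈ C`, contradicting `C' ∩ C = ∅`.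
-/

open Submodule
open scoped Pointwise

namespace ConvexCone

theorem coe_span_eq_sub {R M : Type*} [Ring R] [LinearOrder R] [AddLeftStrictMono R]
    [AddCommGroup M] [Module R M] (K : ConvexCone R M) (hK : (K : Set M).Nonempty) :
    (span R (K : Set M) : Set M) = (K : Set M) - K := by
  obtain ⟨c, hc⟩ := hK
  let S : Submodule R M :=
    { carrier := (K : Set M) - K
      add_mem' := by
        rintro _ _ ⟨a₁, ha₁, b₁, hb₁, rfl⟩ ⟨a₂, ha₂, b₂, hb₂, rfl⟩
        exact ⟨a₁ + a₂, K.add_mem ha₁ ha₂, b₁ + b₂, K.add_mem hb₁ hb₂, add_sub_add_comm ..⟩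
      zero_mem' := ⟨c, hc, c, hc, sub_self c⟩
      smul_mem' := by
        rintro r _ ⟨a, ha, b, hb, rfl⟩
        rcases lt_trichotomy r 0 with hr | rfl | hr
        · refine ⟨(-r) • b, K.smul_mem (neg_pos.mpr hr) hb,
            (-r) • a, K.smul_mem (neg_pos.mpr hr) ha, ?_⟩
          dsimp only
          rw [neg_smul, neg_smul, neg_sub_neg, smul_sub]
        · exact ⟨c, hc, c, hc, by dsimp only; rw [sub_self, zero_smul]⟩
        · exact ⟨r • a, K.smul_mem hr ha, r • b, K.smul_mem hr hb, (smul_sub r a b).symm⟩ }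
  refine congrArg SetLike.coe ((span_le (p := S).mpr fun x hx ↦ ?_).antisymm ?_)
  · exact ⟨x + c, K.add_mem hx hc, c, hc, add_sub_cancel_right x c⟩
  · rintro _ ⟨a, ha, b, hb, rfl⟩
    exact sub_mem (subset_span ha) (subset_span hb)

variable {𝕜 E : Type*} [Field 𝕜] [LinearOrder 𝕜] [IsStrictOrderedRing 𝕜]
  [AddCommGroup E] [Module 𝕜 E] [TopologicalSpace E] [IsTopologicalAddGroup E]

theorem add_mem_of_mem_closure [ContinuousConstSMul 𝕜 E] {K : ConvexCone 𝕜 E}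
    (hK : IsOpen (K : Set E)) {y z : E} (hy : y ∈ K) (hz : z ∈ closure (K : Set E)) :
    y + z ∈ K := by
  rw [← SetLike.mem_coe, ← hK.interior_eq] at hy
  have hmid : (2⁻¹ : 𝕜) • y + (2⁻¹ : 𝕜) • z ∈ K := by
    rw [← SetLike.mem_coe, ← hK.interior_eq]
    exact K.convex.combo_interior_closure_mem_interior hy hz (by norm_num) (by norm_num)
      (by norm_num)
  simpa [smul_add, smul_smul] using K.smul_mem (two_pos : (0 : 𝕜) < 2) hmid

theorem add_mem_of_mem_closure_of_isOpen_span [TopologicalSpace 𝕜] [ContinuousSMul 𝕜 E]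
    {K : ConvexCone 𝕜 E}
    (hclosed : IsClosed (span 𝕜 (K : Set E) : Set E))
    (hK : IsOpen (((↑) : span 𝕜 (K : Set E) → E) ⁻¹' K)) {y z : E}
    (hy : y ∈ K) (hz : z ∈ closure (K : Set E)) : y + z ∈ K := by
  set W := span 𝕜 (K : Set E)
  have hzW : z ∈ W := closure_minimal subset_span hclosed hz
  have hzK : (⟨z, hzW⟩ : W) ∈ closure (K.comap W.subtype : Set W) := by
    rw [coe_comap, Topology.IsEmbedding.subtypeVal.closure_eq_preimage_closure_image]
    change z ∈ closure (Subtype.val '' (Subtype.val ⁻¹' (K : Set E)))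
    rwa [Set.image_preimage_eq_of_subset (Subtype.range_coe (s := (W : Set E)) ▸ subset_span)]
  exact add_mem_of_mem_closure (K := K.comap W.subtype) hK (y := ⟨y, subset_span hy⟩) hy hzK

end ConvexCone

theorem cone_boundary_dim_lt_general {V : Type*} [NormedAddCommGroup V] [InnerProductSpace ℝ V]
    [FiniteDimensional ℝ V] (C C' : Set V)
    (hCadd : ∀ x ∈ C, ∀ y ∈ C, x + y ∈ C)
    (hCsmul : ∀ x ∈ C, ∀ c : ℝ, 0 < c → c • x ∈ C)
    (hC'add : ∀ x ∈ C', ∀ y ∈ C', x + y ∈ C')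
    (hC'smul : ∀ x ∈ C', ∀ c : ℝ, 0 < c → c • x ∈ C')
    (hCne : C.Nonempty) (hC'ne : C'.Nonempty)
    (hopen : IsOpen ((↑) ⁻¹' C : Set (Submodule.span ℝ C)))
    (hsub : C' ⊆ closure C \ C) :
    Module.finrank ℝ (Submodule.span ℝ C') < Module.finrank ℝ (Submodule.span ℝ C) := by
  let K : ConvexCone ℝ V := ⟨C, fun c hc x hx ↦ hCsmul x hx c hc, fun x hx y hy ↦ hCadd x hx y hy⟩
  let K' : ConvexCone ℝ V :=
    ⟨C', fun c hc x hx ↦ hC'smul x hx c hc, fun x hx y hy ↦ hC'add x hx y hy⟩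
  have hclosed : IsClosed (span ℝ C : Set V) := closed_of_finiteDimensional _
  have hle : span ℝ C' ≤ span ℝ C :=
    span_le.mpr fun x hx ↦ closure_minimal subset_span hclosed (hsub hx).1
  refine finrank_lt_finrank_of_lt (hle.lt_of_ne fun heq ↦ ?_)
  obtain ⟨x, hx⟩ := hCne
  obtain ⟨a, ha, b, hb, rfl⟩ : x ∈ (K' : Set V) - (K' : Set V) := by
    rw [← K'.coe_span_eq_sub hC'ne]
    exact heq ▸ subset_span hx
  have hab : a - b + b ∈ C :=
    K.add_mem_of_mem_closure_of_isOpen_span hclosed hopen hx (hsub hb).1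
  exact (hsub ha).2 (by rwa [sub_add_cancel] at hab)

/-- If `C` is a nonempty convex cone in a finite-dimensional real inner product space,
open in its linear span, and `C'` is a nonempty convex cone contained in `cl(C) \ C`,
then the dimension of the span of `C'` is strictly smaller than that of `C`. -/
theorem cone_boundary_dim_lt {V : Type*} [NormedAddCommGroup V] [InnerProductSpace ℝ V]
    [FiniteDimensional ℝ V] (C C' : Set V)
    (hCadd : ∀ x ∈ C, ∀ y ∈ C, x + y ∈ C)
    (hCsmul : ∀ x ∈ C, ∀ c : ℝ, 0 < c → c • x ∈ C)
    (hC'add : ∀ x ∈ C', ∀ y ∈ C', x + y ∈ C')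
    (hC'smul : ∀ x ∈ C', ∀ c : ℝ, 0 < c → c • x ∈ C')
    (hCconv : Convex ℝ C) (hC'conv : Convex ℝ C')
    (hCne : C.Nonempty) (hC'ne : C'.Nonempty)
    (hopen : IsOpen ((↑) ⁻¹' C : Set (Submodule.span ℝ C)))
    (hsub : C' ⊆ closure C \ C) :
    Module.finrank ℝ (Submodule.span ℝ C') < Module.finrank ℝ (Submodule.span ℝ C) :=
  cone_boundary_dim_lt_general C C' hCadd hCsmul hC'add hC'smul hCne hC'ne hopen hsub
end

section
/- The fundamental region C⁽ⁿ⁾ for the diagonal action of a finite reflection group W on Vⁿ is a convex subset of Vⁿ. -/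
open scoped RealInnerProductSpace

variable {V : Type*} [NormedAddCommGroup V] [InnerProductSpace ℝ V] [FiniteDimensional ℝ V]

/-- Orthogonal reflection in the (nonzero) vector `α`. -/
noncomputable def sref (α : V) : V ≃ₗᵢ[ℝ] V := Submodule.reflection (ℝ ∙ α)ᗮ

/-- The cone of nonnegative linear combinations of a finite set `Pi`. -/
def posCone (Pi : Finset V) : Set V :=
  {v | ∃ c : V → ℝ, (∀ x, 0 ≤ c x) ∧ v = ∑ x ∈ Pi, c x • x}

/-- The reflection group generated by the reflections in the roots of `Φ`. -/
noncomputable def Wgroup (Φ : Set V) : Subgroup (V ≃ₗᵢ[ℝ] V) :=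
  Subgroup.closure {g | ∃ α ∈ Φ, g = sref α}

/-- The fundamental chamber of the reflection subgroup (given as a set of isometries
`Wsub`), with respect to its positive system inherited from `Φ₊ = Φ ∩ posCone Pi`. -/
def chamber (Φ : Set V) (Pi : Finset V) (Wsub : Set (V ≃ₗᵢ[ℝ] V)) : Set V :=
  {u | ∀ α ∈ Φ, sref α ∈ Wsub → α ∈ posCone Pi → 0 ≤ ⟪u, α⟫}

/-- Pointwise stabilizer in `W` of the first `m` coordinates of the tuple `v`. -/
def stabSet (Φ : Set V) {n : ℕ} (v : Fin n → V) (m : ℕ) : Set (V ≃ₗᵢ[ℝ] V) :=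
  {w | w ∈ Wgroup Φ ∧ ∀ i : Fin n, (i : ℕ) < m → w (v i) = v i}

/-- The fundamental region `C⁽ⁿ⁾` for the diagonal `W`-action on `Vⁿ`. -/
def Cfund (Φ : Set V) (Pi : Finset V) (n : ℕ) : Set (Fin n → V) :=
  {v | ∀ m : Fin n, v m ∈ chamber Φ Pi (stabSet Φ v (m : ℕ))}

/-! If `sref α` fixes the first `m` coordinates of `a • u + b • v` with `a, b > 0`, then it fixes
the first `m` coordinates of `u` and of `v`: inductively, once it fixes the coordinates before `i`,
the chamber conditions make `⟪u i, α⟫` and `⟪v i, α⟫` nonnegative, and their positive combination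
`⟪(a • u + b • v) i, α⟫` vanishes. So the same root inequalities constrain `u`, `v` and
`a • u + b • v`, and `C⁽ⁿ⁾` is a convex cone. -/

section

omit [FiniteDimensional ℝ V]

theorem sref_apply_eq_self_iff (α x : V) : sref α x = x ↔ ⟪x, α⟫ = 0 := by
  rw [sref, Submodule.reflection_eq_self_iff, Submodule.mem_orthogonal_singleton_iff_inner_right,
    real_inner_comm]

theorem sref_mem_stabSet_iff {Φ : Set V} {n : ℕ} {v : Fin n → V} {m : ℕ} {α : V} :
    sref α ∈ stabSet Φ v m ↔ sref α ∈ Wgroup Φ ∧ ∀ i : Fin n, (i : ℕ) < m → ⟪v i, α⟫ = 0 := by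
  simp only [stabSet, Set.mem_ofPred_eq, sref_apply_eq_self_iff]

theorem inner_eq_zero_of_sref_mem_stabSet_add {Φ : Set V} {Pi : Finset V} {n : ℕ}
    {u v : Fin n → V} (hu : u ∈ Cfund Φ Pi n) (hv : v ∈ Cfund Φ Pi n) {a b : ℝ}
    (ha : 0 < a) (hb : 0 < b) {α : V} (hαΦ : α ∈ Φ) (hαpos : α ∈ posCone Pi) {m : ℕ}
    (hα : sref α ∈ stabSet Φ (a • u + b • v) m) (i : Fin n) (him : (i : ℕ) < m) :
    ⟪u i, α⟫ = 0 ∧ ⟪v i, α⟫ = 0 := by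
  rw [sref_mem_stabSet_iff] at hα
  induction i using WellFoundedLT.induction with
  | ind i ih =>
    have hstab (w : Fin n → V) (hw : ∀ j < i, ⟪w j, α⟫ = 0) : sref α ∈ stabSet Φ w i :=
      sref_mem_stabSet_iff.2 ⟨hα.1, fun j hji => hw j (Fin.lt_def.2 hji)⟩
    have hui : 0 ≤ ⟪u i, α⟫ :=
      hu i α hαΦ (hstab u fun j hj => (ih j hj ((Fin.lt_def.1 hj).trans him)).1) hαpos
    have hvi : 0 ≤ ⟪v i, α⟫ :=
      hv i α hαΦ (hstab v fun j hj => (ih j hj ((Fin.lt_def.1 hj).trans him)).2) hαpos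
    have hsum : a * ⟪u i, α⟫ + b * ⟪v i, α⟫ = 0 := by
      simpa [inner_add_left, real_inner_smul_left] using hα.2 i him
    simpa [ha.ne', hb.ne'] using
      (add_eq_zero_iff_of_nonneg (mul_nonneg ha.le hui) (mul_nonneg hb.le hvi)).1 hsum

theorem smul_add_smul_mem_Cfund {Φ : Set V} {Pi : Finset V} {n : ℕ} {u v : Fin n → V}
    (hu : u ∈ Cfund Φ Pi n) (hv : v ∈ Cfund Φ Pi n) {a b : ℝ} (ha : 0 < a) (hb : 0 < b) :
    a • u + b • v ∈ Cfund Φ Pi n := by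
  intro m α hαΦ hα hαpos
  have hzero := inner_eq_zero_of_sref_mem_stabSet_add hu hv ha hb hαΦ hαpos hα
  have hum : 0 ≤ ⟪u m, α⟫ :=
    hu m α hαΦ (sref_mem_stabSet_iff.2 ⟨hα.1, fun j hj => (hzero j hj).1⟩) hαpos
  have hvm : 0 ≤ ⟪v m, α⟫ :=
    hv m α hαΦ (sref_mem_stabSet_iff.2 ⟨hα.1, fun j hj => (hzero j hj).2⟩) hαpos
  show 0 ≤ ⟪a • u m + b • v m, α⟫
  rw [inner_add_left, real_inner_smul_left, real_inner_smul_left]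
  positivity

end

theorem fund_region_convex_general (Φ : Set V) (Pi : Finset V) (n : ℕ) :
    Convex ℝ (Cfund Φ Pi n) :=
  convex_iff_forall_pos.2 fun _ hu _ hv _ _ ha hb _ => smul_add_smul_mem_Cfund hu hv ha hb

/-- The fundamental region `C⁽ⁿ⁾` for the diagonal action of `W` on `Vⁿ` is convex. -/
theorem fund_region_convex (Φ : Set V) (Pi : Finset V)
    (hfin : Φ.Finite) (h0 : (0 : V) ∉ Φ)
    (hrefl : ∀ α ∈ Φ, ∀ β ∈ Φ, sref α β ∈ Φ)
    (hred : ∀ α ∈ Φ, ∀ c : ℝ, c • α ∈ Φ → c = 1 ∨ c = -1)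
    (hPiΦ : (Pi : Set V) ⊆ Φ)
    (hind : LinearIndependent ℝ (fun x : {x : V // x ∈ Pi} => (x : V)))
    (hsplit : ∀ β ∈ Φ, β ∈ posCone Pi ∨ -β ∈ posCone Pi)
    (n : ℕ) :
    Convex ℝ (Cfund Φ Pi n) :=
  fund_region_convex_general Φ Pi n
end

section
/- Let u = (u₁,…,uₙ) and v = (v₁,…,vₙ) be points of the fundamental region C⁽ⁿ⁾ for the diagonal W-action on Vⁿ, and let 0 < t < 1. Then for every m ≤ n, the pointwise stabilizer in W of the first m coordinates of tu + (1−t)v equals the intersection of the pointwise stabilizers of the first m coordinates of u and of v: W_{tu+(1−t)v, m} = W_{u,m} ∩ W_{v,m}. -/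
open scoped RealInnerProductSpace

variable {V : Type*} [NormedAddCommGroup V] [InnerProductSpace ℝ V] [FiniteDimensional ℝ V]

/-!
Write `z = t • u + (1 - t) • v` and let `W_p` be the group generated by the reflections in the
roots orthogonal to `u i` and `v i` for all `i < p`; it fixes these vectors. By induction on `p`,
the stabilizer of `z 0, …, z (p - 1)` is `W_p`. For the step, `u p` and `v p` lie in the closed
fundamental chamber of `W_p`, hence so does `z p`, and by Steinberg's theorem the stabilizer of
`z p` in `W_p` is generated by the reflections in roots orthogonal to `z p`. Such a root, taken
positive, pairs nonnegatively with `u p` and `v p`, and the pairing with `z p` is a positive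
combination of these, so the root is orthogonal to both and its reflection lies in `W_(p+1)`.

Steinberg's theorem is proved as in Humphreys' book: the positive roots are those on which a
generic linear functional is positive, a minimal set of positive roots spanning them as a cone is
a simple system, and a word in simple reflections fixing a point of the chamber either shortens by
the deletion argument or ends in a reflection that fixes the point.
-/

section RootSystems

omit [FiniteDimensional ℝ V]

variable {f : V →ₗ[ℝ] ℝ}

lemma sref_apply (α x : V) : sref α x = x - (2 * ⟪x, α⟫ / ‖α‖ ^ 2) • α := by
  rw [sref, Submodule.reflection_orthogonal_apply, Submodule.reflection_singleton_apply,
    real_inner_comm]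
  simp only [RCLike.ofReal_real_eq_id, id_eq]
  module

lemma sref_self (α : V) : sref α α = -α :=
  Submodule.reflection_orthogonalComplement_singleton_eq_neg α

lemma sref_eq_self_of_inner_eq_zero {α x : V} (h : ⟪x, α⟫ = 0) : sref α x = x := by
  rw [sref_apply, h]; simp

lemma sref_sref (α x : V) : sref α (sref α x) = x :=
  Submodule.reflection_reflection _ x

lemma sref_mul_self (α : V) : sref α * sref α = 1 :=
  Submodule.reflection_mul_reflection _

lemma sref_inv (α : V) : (sref α)⁻¹ = sref α :=
  Submodule.reflection_inv

lemma sref_neg (α : V) : sref (-α) = sref α := by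
  ext x; simp [sref_apply, neg_div, sub_eq_add_neg]

lemma sref_map (w : V ≃ₗᵢ[ℝ] V) (α : V) : sref (w α) = w * sref α * w⁻¹ := by
  ext x
  have hx : ⟪x, w α⟫ = ⟪w⁻¹ x, α⟫ := by
    rw [LinearIsometryEquiv.coe_inv, ← w.inner_map_map (w.symm x) α, w.apply_symm_apply]
  simp [sref_apply, hx]

lemma inner_sref_eq_zero {x α β : V} (hα : ⟪x, α⟫ = 0) (hβ : ⟪x, β⟫ = 0) :
    ⟪x, sref α β⟫ = 0 := by
  rw [sref_apply, inner_sub_right, inner_smul_right, hα, hβ]; ring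

lemma sref_mem_Wgroup {R : Set V} {α : V} (hα : α ∈ R) : sref α ∈ Wgroup R :=
  Subgroup.subset_closure ⟨α, hα, rfl⟩

lemma Wgroup_mono {R R' : Set V} (h : R ⊆ R') : Wgroup R ≤ Wgroup R' :=
  Subgroup.closure_mono fun _ ⟨α, hα, hg⟩ => ⟨α, h hα, hg⟩

lemma subset_posCone {T : Finset V} {x : V} (hx : x ∈ T) : x ∈ posCone T := by
  classical
  exact ⟨fun y => if y = x then 1 else 0, fun y => by positivity, by simp [ite_smul, hx]⟩

lemma posCone_add_mem {T : Finset V} {x y : V} (hx : x ∈ posCone T) (hy : y ∈ posCone T) :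
    x + y ∈ posCone T := by
  obtain ⟨c, hc, rfl⟩ := hx
  obtain ⟨d, hd, rfl⟩ := hy
  exact ⟨c + d, fun z => add_nonneg (hc z) (hd z), by simp [add_smul, Finset.sum_add_distrib]⟩

lemma posCone_smul_mem {T : Finset V} {x : V} {r : ℝ} (hr : 0 ≤ r) (hx : x ∈ posCone T) :
    r • x ∈ posCone T := by
  obtain ⟨c, hc, rfl⟩ := hx
  exact ⟨r • c, fun z => mul_nonneg hr (hc z), by simp [Finset.smul_sum, smul_smul]⟩

lemma posCone_subset_posCone {S T : Finset V} (h : (S : Set V) ⊆ posCone T) :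
    posCone S ⊆ posCone T := by
  rintro _ ⟨c, hc, rfl⟩
  refine Finset.sum_induction _ (· ∈ posCone T) (fun _ _ => posCone_add_mem) ?_
    fun x hx => posCone_smul_mem (hc x) (h hx)
  exact ⟨0, fun _ => le_rfl, by simp⟩

lemma map_nonneg_of_mem_posCone {T : Finset V} (hT : ∀ x ∈ T, 0 ≤ f x)
    {x : V} (hx : x ∈ posCone T) : 0 ≤ f x := by
  obtain ⟨c, hc, rfl⟩ := hx
  simpa using Finset.sum_nonneg fun y hy => mul_nonneg (hc y) (hT y hy)

lemma eq_zero_of_map_sum_eq_zero {T : Finset V} {c : V → ℝ}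
    (hT : ∀ x ∈ T, 0 < f x) (hc : ∀ x ∈ T, 0 ≤ c x) (h : f (∑ x ∈ T, c x • x) = 0) :
    ∀ x ∈ T, c x = 0 := by
  simp only [map_sum, map_smul, smul_eq_mul] at h
  intro x hx
  have := (Finset.sum_eq_zero_iff_of_nonneg fun y hy => mul_nonneg (hc y hy) (hT y hy).le).1 h x hx
  exact (mul_eq_zero.1 this).resolve_right (hT x hx).ne'

lemma map_pos_of_mem_posCone {T : Finset V} (hT : ∀ x ∈ T, 0 < f x)
    {x : V} (hx : x ∈ posCone T) (hx0 : x ≠ 0) : 0 < f x := by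
  refine (map_nonneg_of_mem_posCone (fun y hy => (hT y hy).le) hx).lt_of_ne' fun h => hx0 ?_
  obtain ⟨c, hc, rfl⟩ := hx
  exact Finset.sum_eq_zero fun y hy => by
    rw [eq_zero_of_map_sum_eq_zero hT (fun y _ => hc y) h y hy, zero_smul]

lemma linearIndepOn_of_inner_nonpos {D : Finset V} (hf : ∀ x ∈ D, 0 < f x)
    (hD : ∀ x ∈ D, ∀ y ∈ D, x ≠ y → ⟪x, y⟫ ≤ 0) : LinearIndepOn ℝ id (D : Set V) := by
  classical
  rw [linearIndepOn_finset_iff]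
  intro a ha x hx
  simp only [id] at ha
  set P := {x ∈ D | 0 < a x}
  set N := {x ∈ D | ¬ 0 < a x}
  have hPN : ∑ x ∈ P, a x • x = ∑ x ∈ N, (-a x) • x := by
    have := Finset.sum_filter_add_sum_filter_not D (0 < a ·) (fun x => a x • x)
    rw [ha] at this
    simpa only [neg_smul, Finset.sum_neg_distrib] using eq_neg_of_add_eq_zero_left this
  -- the two halves have nonpositive inner product, so they vanish
  have hP0 : ∑ x ∈ P, a x • x = 0 := by
    rw [← real_inner_self_nonpos]
    nth_rewrite 2 [hPN]
    rw [sum_inner]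
    refine Finset.sum_nonpos fun x hx => ?_
    rw [inner_sum]
    refine Finset.sum_nonpos fun y hy => ?_
    obtain ⟨hxD, hx⟩ := Finset.mem_filter.1 hx
    obtain ⟨hyD, hy⟩ := Finset.mem_filter.1 hy
    have hxy := hD x hxD y hyD (by rintro rfl; exact hy hx)
    rw [real_inner_smul_left, real_inner_smul_right]
    nlinarith [mul_nonneg hx.le (neg_nonneg.2 (not_lt.1 hy))]
  by_cases h : 0 < a x
  · exact eq_zero_of_map_sum_eq_zero (T := P) (fun y hy => hf y (Finset.mem_filter.1 hy).1)
      (fun y hy => (Finset.mem_filter.1 hy).2.le) (by rw [hP0, map_zero]) x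
      (Finset.mem_filter.2 ⟨hx, h⟩)
  · refine neg_eq_zero.1 (eq_zero_of_map_sum_eq_zero (T := N) (c := fun y => -a y)
      (fun y hy => hf y (Finset.mem_filter.1 hy).1)
      (fun y hy => neg_nonneg.2 (not_lt.1 (Finset.mem_filter.1 hy).2))
      (by rw [← hPN, hP0, map_zero]) x (Finset.mem_filter.2 ⟨hx, h⟩))

lemma exists_linearMap_eq_one {K M ι : Type*} [Field K] [AddCommGroup M] [Module K M]
    {v : ι → M} (hv : LinearIndependent K v) : ∃ f : M →ₗ[K] K, ∀ i, f (v i) = 1 := by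
  obtain ⟨f, hf⟩ := LinearMap.exists_extend
    (Finsupp.linearCombination K (fun _ => (1 : K)) ∘ₗ hv.repr)
  refine ⟨f, fun i => ?_⟩
  have := LinearMap.congr_fun hf ⟨v i, Submodule.subset_span (Set.mem_range_self i)⟩
  simpa [hv.repr_eq_single i ⟨v i, _⟩ rfl] using this

lemma exists_inner_pos_of_mem_posCone {T : Finset V} {x : V} (hx : x ∈ posCone T) (hx0 : x ≠ 0) :
    ∃ y ∈ T, 0 < ⟪x, y⟫ := by
  by_contra! h
  obtain ⟨c, hc, hxc⟩ := hx
  have : ⟪x, x⟫ ≤ 0 := by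
    nth_rewrite 2 [hxc]
    rw [inner_sum]
    exact Finset.sum_nonpos fun y hy => by
      rw [real_inner_smul_right]; exact mul_nonpos_of_nonneg_of_nonpos (hc y) (h y hy)
  exact hx0 (real_inner_self_nonpos.1 this)

lemma map_sref_lt {α β : V} (hα : 0 < f α) (hβα : 0 < ⟪β, α⟫) :
    f (sref α β) < f β := by
  have hα0 : α ≠ 0 := by rintro rfl; simp at hα
  have : 0 < 2 * ⟪β, α⟫ / ‖α‖ ^ 2 := by positivity
  rw [sref_apply, map_sub, map_smul, smul_eq_mul]
  nlinarith

noncomputable def wprod (l : List V) : V ≃ₗᵢ[ℝ] V := (l.map sref).prod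

@[simp] lemma wprod_nil : wprod ([] : List V) = 1 := rfl

@[simp] lemma wprod_cons (α : V) (l : List V) : wprod (α :: l) = sref α * wprod l := by
  simp [wprod]

@[simp] lemma wprod_append (l r : List V) : wprod (l ++ r) = wprod l * wprod r := by
  simp [wprod]

lemma wprod_reverse (l : List V) : wprod l.reverse = (wprod l)⁻¹ := by
  induction l with
  | nil => simp
  | cons α l ih => simp [ih, sref_inv]

lemma exists_wprod_eq {S : Set V} {w : V ≃ₗᵢ[ℝ] V} (hw : w ∈ Wgroup S) :
    ∃ l : List V, (∀ α ∈ l, α ∈ S) ∧ wprod l = w := by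
  induction hw using Subgroup.closure_induction with
  | mem g hg =>
    obtain ⟨α, hα, rfl⟩ := hg
    exact ⟨[α], by simpa using hα, by simp⟩
  | one => exact ⟨[], by simp, rfl⟩
  | mul a b _ _ iha ihb =>
    obtain ⟨la, hla, rfl⟩ := iha
    obtain ⟨lb, hlb, rfl⟩ := ihb
    exact ⟨la ++ lb, fun α hα => (List.mem_append.1 hα).elim (hla α) (hlb α),
      wprod_append la lb⟩
  | inv a _ iha =>
    obtain ⟨la, hla, rfl⟩ := iha
    exact ⟨la.reverse, by simpa using hla, wprod_reverse la⟩

lemma Wgroup_apply_eq_self {R : Set V} {x : V} (hx : ∀ α ∈ R, ⟪x, α⟫ = 0)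
    {w : V ≃ₗᵢ[ℝ] V} (hw : w ∈ Wgroup R) : w x = x := by
  induction hw using Subgroup.closure_induction with
  | mem g hg =>
    obtain ⟨α, hα, rfl⟩ := hg
    exact sref_eq_self_of_inner_eq_zero (hx α hα)
  | one => rfl
  | mul a b _ _ iha ihb => simp [iha, ihb]
  | inv a _ iha => simpa using a.symm_apply_eq.2 iha.symm

/-- Positivity of roots is measured by the linear functional `f` rather than by a cone, so that
it is inherited by every subsystem. -/
structure IsOrderedRootSystem (R : Set V) (f : V →ₗ[ℝ] ℝ) : Prop where
  finite : R.Finite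
  sref_mem : ∀ α ∈ R, ∀ β ∈ R, sref α β ∈ R
  reduced : ∀ α ∈ R, ∀ c : ℝ, c • α ∈ R → c = 1 ∨ c = -1
  map_ne_zero : ∀ α ∈ R, f α ≠ 0

def posRoots (R : Set V) (f : V →ₗ[ℝ] ℝ) : Set V := {α ∈ R | 0 < f α}

def closedChamber (R : Set V) (f : V →ₗ[ℝ] ℝ) : Set V := {x | ∀ α ∈ posRoots R f, 0 ≤ ⟪x, α⟫}

open Classical in
structure IsSimpleSystem (R : Set V) (f : V →ₗ[ℝ] ℝ) (D : Finset V) : Prop where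
  subset_posRoots : (D : Set V) ⊆ posRoots R f
  posRoots_subset : posRoots R f ⊆ posCone D
  notMem_posCone_erase : ∀ α ∈ D, α ∉ posCone (D.erase α)

variable {R : Set V} {D : Finset V}

lemma convex_closedChamber : Convex ℝ (closedChamber R f) := by
  intro x hx y hy a b ha hb _ α hα
  rw [inner_add_left, real_inner_smul_left, real_inner_smul_left]
  have := hx α hα
  have := hy α hα
  positivity

namespace IsOrderedRootSystem

lemma neg_mem (hR : IsOrderedRootSystem R f) {α : V} (hα : α ∈ R) : -α ∈ R := by
  simpa [sref_self] using hR.sref_mem α hα α hα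

lemma neg_mem_posRoots (hR : IsOrderedRootSystem R f) {α : V} (hα : α ∈ R)
    (hα' : α ∉ posRoots R f) : -α ∈ posRoots R f := by
  have hnonpos : f α ≤ 0 := not_lt.1 fun h => hα' ⟨hα, h⟩
  rw [posRoots, Set.mem_ofPred_eq, map_neg, neg_pos]
  exact ⟨hR.neg_mem hα, hnonpos.lt_of_ne (hR.map_ne_zero α hα)⟩

lemma mono {R' : Set V} (hR : IsOrderedRootSystem R f) (hR' : R' ⊆ R)
    (hcl : ∀ α ∈ R', ∀ β ∈ R', sref α β ∈ R') : IsOrderedRootSystem R' f :=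
  ⟨hR.finite.subset hR', hcl, fun α hα c hc => hR.reduced α (hR' hα) c (hR' hc),
    fun α hα => hR.map_ne_zero α (hR' hα)⟩

lemma wprod_apply_mem (hR : IsOrderedRootSystem R f) {l : List V} (hl : ∀ α ∈ l, α ∈ R)
    {β : V} (hβ : β ∈ R) : wprod l β ∈ R := by
  induction l with
  | nil => simpa using hβ
  | cons α l ih =>
    simp only [List.forall_mem_cons] at hl
    simpa using hR.sref_mem α hl.1 _ (ih hl.2)

lemma exists_isSimpleSystem (hR : IsOrderedRootSystem R f) : ∃ D, IsSimpleSystem R f D := by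
  classical
  have hfin : (posRoots R f).Finite := hR.finite.subset fun α h => h.1
  obtain ⟨D, hD, hmin⟩ := Finset.exists_min_image
    {E ∈ hfin.toFinset.powerset | posRoots R f ⊆ posCone E} Finset.card
    ⟨hfin.toFinset, Finset.mem_filter.2 ⟨Finset.mem_powerset.2 subset_rfl,
      fun α hα => subset_posCone (hfin.mem_toFinset.2 hα)⟩⟩
  rw [Finset.mem_filter, Finset.mem_powerset] at hD
  refine ⟨D, fun α hα => hfin.mem_toFinset.1 (hD.1 hα), hD.2, fun α hα hmem => ?_⟩
  -- otherwise `D.erase α` would be a smaller spanning set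
  have hcov : posRoots R f ⊆ posCone (D.erase α) := by
    refine hD.2.trans (posCone_subset_posCone fun β hβ => ?_)
    by_cases h : β = α
    · exact h ▸ hmem
    · exact subset_posCone (Finset.mem_erase.2 ⟨h, hβ⟩)
  have := hmin (D.erase α) (Finset.mem_filter.2
    ⟨Finset.mem_powerset.2 ((D.erase_subset α).trans hD.1), hcov⟩)
  exact (Finset.card_erase_lt_of_mem hα).not_ge this

lemma inner_eq_zero_of_convex_combination (hR : IsOrderedRootSystem R f) {x y : V}
    (hx : x ∈ closedChamber R f) (hy : y ∈ closedChamber R f) {t : ℝ} (ht0 : 0 < t) (ht1 : t < 1)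
    {α : V} (hα : α ∈ R) (h : ⟪t • x + (1 - t) • y, α⟫ = 0) : ⟪x, α⟫ = 0 ∧ ⟪y, α⟫ = 0 := by
  have key : ∀ β ∈ posRoots R f, ⟪t • x + (1 - t) • y, β⟫ = 0 → ⟪x, β⟫ = 0 ∧ ⟪y, β⟫ = 0 := by
    intro β hβ h
    rw [inner_add_left, real_inner_smul_left, real_inner_smul_left] at h
    have := hx β hβ
    have := hy β hβ
    constructor <;> nlinarith
  by_cases hpos : α ∈ posRoots R f
  · exact key α hpos h
  · simpa using key (-α) (hR.neg_mem_posRoots hα hpos) (by simpa using h)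

end IsOrderedRootSystem

namespace IsSimpleSystem

lemma mem (hD : IsSimpleSystem R f D) {α : V} (hα : α ∈ D) : α ∈ R := (hD.subset_posRoots hα).1

lemma map_pos (hD : IsSimpleSystem R f D) {α : V} (hα : α ∈ D) : 0 < f α :=
  (hD.subset_posRoots hα).2

lemma smul_sub_smul_notMem_posCone (hD : IsSimpleSystem R f D) {x y : V} (hx : x ∈ D)
    (hy : y ∈ D) (hxy : x ≠ y) (a : ℝ) {b : ℝ} (hb : 0 < b) :
    a • x - b • y ∉ posCone D := by
  classical
  rintro ⟨d, hd, hsum⟩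
  rw [← Finset.add_sum_erase D _ hx] at hsum
  set S := ∑ z ∈ D.erase x, d z • z
  have hS : S ∈ posCone (D.erase x) := ⟨d, hd, rfl⟩
  rcases lt_or_ge (d x) a with hlt | hle
  · apply hD.notMem_posCone_erase x hx
    have hx' : x = (a - d x)⁻¹ • (b • y + S) := by
      rw [eq_inv_smul_iff₀ (sub_ne_zero.2 hlt.ne')]
      linear_combination (norm := module) hsum
    have hmem := posCone_smul_mem (inv_nonneg.2 (sub_nonneg.2 hlt.le)) (posCone_add_mem
      (posCone_smul_mem hb.le (subset_posCone (Finset.mem_erase.2 ⟨hxy.symm, hy⟩))) hS)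
    rwa [← hx'] at hmem
  · have hfS : 0 ≤ f S := map_nonneg_of_mem_posCone
      (fun z hz => (hD.map_pos (Finset.mem_of_mem_erase hz)).le) hS
    have := congrArg f hsum
    simp only [map_sub, map_add, map_smul, smul_eq_mul] at this
    nlinarith [hD.map_pos hx, hD.map_pos hy]

lemma inner_nonpos (hD : IsSimpleSystem R f D) (hR : IsOrderedRootSystem R f) {α β : V}
    (hα : α ∈ D) (hβ : β ∈ D) (hne : α ≠ β) : ⟪α, β⟫ ≤ 0 := by
  by_contra! hαβ
  have hα0 : α ≠ 0 := by rintro rfl; simpa using hD.map_pos hα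
  have hc : 0 < 2 * ⟪β, α⟫ / ‖α‖ ^ 2 := by rw [real_inner_comm]; positivity
  have hγ := hR.sref_mem α (hD.mem hα) β (hD.mem hβ)
  rw [sref_apply] at hγ
  by_cases hpos : β - (2 * ⟪β, α⟫ / ‖α‖ ^ 2) • α ∈ posRoots R f
  · refine hD.smul_sub_smul_notMem_posCone hβ hα hne.symm 1 hc ?_
    simpa using hD.posRoots_subset hpos
  · refine hD.smul_sub_smul_notMem_posCone hα hβ hne (2 * ⟪β, α⟫ / ‖α‖ ^ 2) one_pos ?_
    simpa using hD.posRoots_subset (hR.neg_mem_posRoots hγ hpos)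

lemma linearIndepOn (hD : IsSimpleSystem R f D) (hR : IsOrderedRootSystem R f) :
    LinearIndepOn ℝ id (D : Set V) :=
  linearIndepOn_of_inner_nonpos (fun _ => hD.map_pos) fun _ hα _ hβ => hD.inner_nonpos hR hα hβ

lemma sref_mem_posRoots (hD : IsSimpleSystem R f D) (hR : IsOrderedRootSystem R f) {α β : V}
    (hα : α ∈ D) (hβ : β ∈ posRoots R f) (hne : β ≠ α) : sref α β ∈ posRoots R f := by
  classical
  by_contra hneg
  have hγ := hR.neg_mem_posRoots (hR.sref_mem α (hD.mem hα) β hβ.1) hneg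
  obtain ⟨c, hc, hβc⟩ := hD.posRoots_subset hβ
  obtain ⟨d, hd, hγd⟩ := hD.posRoots_subset hγ
  set k := 2 * ⟪β, α⟫ / ‖α‖ ^ 2
  -- `β` and `-sref α β` are both nonnegative combinations of `D` and they add up to `k • α`
  have hsum : ∑ γ ∈ D, (c γ + d γ - if γ = α then k else 0) • γ = 0 := by
    simp only [sub_smul, add_smul, ite_smul, zero_smul, Finset.sum_sub_distrib,
      Finset.sum_add_distrib, Finset.sum_ite_eq', if_pos hα, ← hβc, ← hγd, sref_apply]
    abel
  have hcα : ∀ γ ∈ D, γ ≠ α → c γ = 0 := fun γ hγ h => by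
    have := linearIndepOn_finset_iff.1 (hD.linearIndepOn hR) _ hsum γ hγ
    rw [if_neg h] at this
    linarith [hc γ, hd γ]
  have hβα : β = c α • α := by
    rw [hβc, Finset.sum_eq_single α (fun γ hγ h => by rw [hcα γ hγ h, zero_smul])
      fun h => absurd hα h]
  rcases hR.reduced α (hD.mem hα) (c α) (hβα ▸ hβ.1) with h | h
  · exact hne (by rw [hβα, h, one_smul])
  · have := hβ.2
    rw [hβα, h, neg_one_smul, map_neg] at this
    linarith [hD.map_pos hα]

lemma exists_mem_Wgroup_apply_eq (hD : IsSimpleSystem R f D) (hR : IsOrderedRootSystem R f)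
    {β : V} (hβ : β ∈ posRoots R f) : ∃ w ∈ Wgroup (D : Set V), ∃ γ ∈ D, w γ = β := by
  by_contra hβ'
  -- a counterexample `β` with `f β` minimal can be pushed lower by a simple reflection
  obtain ⟨β, ⟨hβ, hβ'⟩, hmin⟩ := Set.exists_min_image
    {β ∈ posRoots R f | ¬ ∃ w ∈ Wgroup (D : Set V), ∃ γ ∈ D, w γ = β} f
    (hR.finite.subset fun β h => h.1.1) ⟨β, hβ, hβ'⟩
  have hβD : β ∉ D := fun h => hβ' ⟨1, one_mem _, β, h, rfl⟩
  have hβ0 : β ≠ 0 := by rintro rfl; simpa using hβ.2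
  obtain ⟨γ, hγ, hβγ⟩ := exists_inner_pos_of_mem_posCone (hD.posRoots_subset hβ) hβ0
  have hlt := map_sref_lt (hD.map_pos hγ) hβγ
  have hne : β ≠ γ := fun h => hβD (h ▸ hγ)
  by_cases hγβ : ∃ w ∈ Wgroup (D : Set V), ∃ δ ∈ D, w δ = sref γ β
  · obtain ⟨w, hw, δ, hδ, hwδ⟩ := hγβ
    refine hβ' ⟨sref γ * w, mul_mem (sref_mem_Wgroup hγ) hw, δ, hδ, ?_⟩
    simp [hwδ, sref_sref]
  · exact (hmin _ ⟨hD.sref_mem_posRoots hR hγ hβ hne, hγβ⟩).not_gt hlt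

lemma Wgroup_eq (hD : IsSimpleSystem R f D) (hR : IsOrderedRootSystem R f) :
    Wgroup R = Wgroup (D : Set V) := by
  refine le_antisymm (Subgroup.closure_le _ |>.2 ?_) (Wgroup_mono fun _ => hD.mem)
  rintro _ ⟨β, hβ, rfl⟩
  have key : ∀ β ∈ posRoots R f, sref β ∈ Wgroup (D : Set V) := fun β hβ => by
    obtain ⟨w, hw, γ, hγ, rfl⟩ := hD.exists_mem_Wgroup_apply_eq hR hβ
    rw [sref_map]
    exact mul_mem (mul_mem hw (sref_mem_Wgroup hγ)) (inv_mem hw)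
  by_cases hpos : β ∈ posRoots R f
  · exact key β hpos
  · simpa [sref_neg] using key _ (hR.neg_mem_posRoots hβ hpos)

lemma exists_wprod_eq_mul_sref (hD : IsSimpleSystem R f D) (hR : IsOrderedRootSystem R f)
    {α : V} (hα : α ∈ D) {l : List V} (hl : ∀ γ ∈ l, γ ∈ D) (hneg : f (wprod l α) < 0) :
    ∃ l' : List V, (∀ γ ∈ l', γ ∈ D) ∧ l'.length < l.length ∧ wprod l' = wprod l * sref α := by
  induction l with
  | nil => simpa using (hD.map_pos hα).trans hneg
  | cons γ r ih =>
    simp only [List.forall_mem_cons] at hl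
    by_cases hr : f (wprod r α) < 0
    · obtain ⟨r', hr', hlen, heq⟩ := ih hl.2 hr
      exact ⟨γ :: r', List.forall_mem_cons.2 ⟨hl.1, hr'⟩, by simpa using hlen,
        by simp [heq, mul_assoc]⟩
    -- `sref γ` sends the positive root `wprod r α` to a negative one, so it is `γ`
    have hpos : wprod r α ∈ posRoots R f :=
      have hmem := hR.wprod_apply_mem (fun β hβ => hD.mem (hl.2 β hβ)) (hD.mem hα)
      ⟨hmem, (not_lt.1 hr).lt_of_ne' (hR.map_ne_zero _ hmem)⟩
    have heq : wprod r α = γ := by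
      by_contra hne
      have := (hD.sref_mem_posRoots hR hl.1 hpos hne).2
      simp only [wprod_cons, LinearIsometryEquiv.coe_mul, Function.comp_apply] at hneg
      linarith
    refine ⟨r, hl.2, by simp, ?_⟩
    rw [wprod_cons, ← heq, sref_map, inv_mul_cancel_right, mul_assoc, sref_mul_self, mul_one]

lemma wprod_mem_Wgroup_of_apply_eq (hD : IsSimpleSystem R f D) (hR : IsOrderedRootSystem R f)
    {z : V} (hz : z ∈ closedChamber R f) {l : List V} (hl : ∀ γ ∈ l, γ ∈ D)
    (hlz : wprod l z = z) : wprod l ∈ Wgroup {α ∈ R | ⟪z, α⟫ = 0} := by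
  induction hn : l.length using Nat.strong_induction_on generalizing l with
  | _ n ih =>
  subst hn
  rcases List.eq_nil_or_concat' l with rfl | ⟨r, α, rfl⟩
  · exact one_mem _
  simp only [List.mem_append, List.mem_singleton] at hl
  have hα : α ∈ D := hl α (Or.inr rfl)
  have hr : ∀ γ ∈ r, γ ∈ D := fun γ hγ => hl γ (Or.inl hγ)
  by_cases hneg : f (wprod r α) < 0
  · obtain ⟨l', hl', hlen, heq⟩ := hD.exists_wprod_eq_mul_sref hR hα hr hneg
    have hl'eq : wprod l' = wprod (r ++ [α]) := by simp [heq]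
    rw [← hl'eq] at hlz ⊢
    exact ih _ (by simpa using hlen.trans (Nat.lt_succ_self _)) hl' hlz rfl
  -- otherwise the last letter `sref α` already fixes `z`
  have hpos : wprod r α ∈ posRoots R f :=
    have hmem := hR.wprod_apply_mem (fun β hβ => hD.mem (hr β hβ)) (hD.mem hα)
    ⟨hmem, (not_lt.1 hneg).lt_of_ne' (hR.map_ne_zero _ hmem)⟩
  have hzα : ⟪z, α⟫ = 0 := by
    have : ⟪z, α⟫ = -⟪z, wprod r α⟫ := calc
      ⟪z, α⟫ = ⟪wprod (r ++ [α]) z, wprod (r ++ [α]) α⟫ :=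
        (LinearIsometryEquiv.inner_map_map _ _ _).symm
      _ = -⟪z, wprod r α⟫ := by rw [hlz]; simp [sref_self]
    linarith [hz α (hD.subset_posRoots hα), hz _ hpos]
  have hrz : wprod r z = z := by simpa [sref_eq_self_of_inner_eq_zero hzα] using hlz
  have hsα : sref α ∈ Wgroup {α ∈ R | ⟪z, α⟫ = 0} := sref_mem_Wgroup ⟨hD.mem hα, hzα⟩
  rw [wprod_append]
  exact mul_mem (ih r.length (by simp) hr hrz rfl) (by simpa using hsα)

end IsSimpleSystem

theorem IsOrderedRootSystem.mem_Wgroup_of_apply_eq (hR : IsOrderedRootSystem R f) {z : V}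
    (hz : z ∈ closedChamber R f) {w : V ≃ₗᵢ[ℝ] V} (hw : w ∈ Wgroup R) (hwz : w z = z) :
    w ∈ Wgroup {α ∈ R | ⟪z, α⟫ = 0} := by
  obtain ⟨D, hD⟩ := hR.exists_isSimpleSystem
  rw [hD.Wgroup_eq hR] at hw
  obtain ⟨l, hl, rfl⟩ := exists_wprod_eq hw
  exact hD.wprod_mem_Wgroup_of_apply_eq hR hz hl hwz

def jointOrthRoots (Φ : Set V) {n : ℕ} (u v : Fin n → V) (p : ℕ) : Set V :=
  {α ∈ Φ | ∀ i : Fin n, (i : ℕ) < p → ⟪u i, α⟫ = 0 ∧ ⟪v i, α⟫ = 0}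

variable {Φ : Set V} {n : ℕ} {u v : Fin n → V}

lemma jointOrthRoots_comm (p : ℕ) : jointOrthRoots Φ u v p = jointOrthRoots Φ v u p := by
  simp only [jointOrthRoots, and_comm]

lemma IsOrderedRootSystem.jointOrthRoots (hΦ : IsOrderedRootSystem Φ f) (p : ℕ) :
    IsOrderedRootSystem (jointOrthRoots Φ u v p) f :=
  hΦ.mono (fun _ h => h.1) fun α hα β hβ => ⟨hΦ.sref_mem α hα.1 β hβ.1, fun i hi =>
    ⟨inner_sref_eq_zero (hα.2 i hi).1 (hβ.2 i hi).1,
      inner_sref_eq_zero (hα.2 i hi).2 (hβ.2 i hi).2⟩⟩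

lemma Wgroup_jointOrthRoots_subset (p : ℕ) :
    (Wgroup (jointOrthRoots Φ u v p) : Set (V ≃ₗᵢ[ℝ] V)) ⊆ stabSet Φ u p ∩ stabSet Φ v p := by
  intro w hw
  have hwΦ := Wgroup_mono (fun _ h => h.1) hw
  exact ⟨⟨hwΦ, fun i hi => Wgroup_apply_eq_self (fun _ hα => (hα.2 i hi).1) hw⟩,
    ⟨hwΦ, fun i hi => Wgroup_apply_eq_self (fun _ hα => (hα.2 i hi).2) hw⟩⟩

lemma stabSet_inter_subset_stabSet_add (a b : ℝ) (p : ℕ) :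
    stabSet Φ u p ∩ stabSet Φ v p ⊆ stabSet Φ (fun i => a • u i + b • v i) p := by
  rintro w ⟨⟨hw, hu⟩, -, hv⟩
  exact ⟨hw, fun i hi => by simp [hu i hi, hv i hi]⟩

lemma mem_closedChamber_jointOrthRoots {Pi : Finset V}
    (hpos : ∀ α ∈ Φ, 0 < f α → α ∈ posCone Pi) (hu : u ∈ Cfund Φ Pi n) (i : Fin n) :
    u i ∈ closedChamber (jointOrthRoots Φ u v i) f := fun α hα =>
  hu i α hα.1.1 (Wgroup_jointOrthRoots_subset i (sref_mem_Wgroup hα.1)).1 (hpos α hα.1.1 hα.2)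

lemma stabSet_subset_Wgroup_jointOrthRoots (hΦ : IsOrderedRootSystem Φ f) {Pi : Finset V}
    (hpos : ∀ α ∈ Φ, 0 < f α → α ∈ posCone Pi) (hu : u ∈ Cfund Φ Pi n) (hv : v ∈ Cfund Φ Pi n)
    {t : ℝ} (ht0 : 0 < t) (ht1 : t < 1) :
    ∀ p, stabSet Φ (fun i => t • u i + (1 - t) • v i) p ⊆ Wgroup (jointOrthRoots Φ u v p)
  | 0 => fun w hw => by simpa [jointOrthRoots] using hw.1
  | p + 1 => fun w hw => by
    have hwp := stabSet_subset_Wgroup_jointOrthRoots hΦ hpos hu hv ht0 ht1 p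
      ⟨hw.1, fun i hi => hw.2 i (by omega)⟩
    by_cases hp : p < n
    · let i : Fin n := ⟨p, hp⟩
      have hR := hΦ.jointOrthRoots (u := u) (v := v) p
      have hui := mem_closedChamber_jointOrthRoots (v := v) hpos hu i
      have hvi : v i ∈ closedChamber (jointOrthRoots Φ u v p) f :=
        jointOrthRoots_comm (Φ := Φ) p ▸ mem_closedChamber_jointOrthRoots hpos hv i
      have hw' := hR.mem_Wgroup_of_apply_eq
        (convex_closedChamber hui hvi ht0.le (by linarith) (by ring)) hwp (hw.2 i (by simp [i]))
      refine Wgroup_mono (R' := jointOrthRoots Φ u v (p + 1))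
        (fun α hα => ⟨hα.1.1, fun j hj => ?_⟩) hw'
      rcases Nat.lt_succ_iff_lt_or_eq.1 hj with hj | hj
      · exact hα.1.2 j hj
      · obtain rfl : j = i := Fin.ext hj
        exact hR.inner_eq_zero_of_convex_combination hui hvi ht0 ht1 hα.1 hα.2
    · exact Wgroup_mono (R' := jointOrthRoots Φ u v (p + 1))
        (fun α hα => ⟨hα.1, fun j hj => hα.2 j (by omega)⟩) hwp

end RootSystems

theorem stab_of_convex_combination_general (Φ : Set V) (Pi : Finset V)
    (hfin : Φ.Finite) (h0 : (0 : V) ∉ Φ)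
    (hrefl : ∀ α ∈ Φ, ∀ β ∈ Φ, sref α β ∈ Φ)
    (hred : ∀ α ∈ Φ, ∀ c : ℝ, c • α ∈ Φ → c = 1 ∨ c = -1)
    (hind : LinearIndependent ℝ (fun x : {x : V // x ∈ Pi} => (x : V)))
    (hsplit : ∀ β ∈ Φ, β ∈ posCone Pi ∨ -β ∈ posCone Pi)
    (n : ℕ) (u v : Fin n → V) (hu : u ∈ Cfund Φ Pi n) (hv : v ∈ Cfund Φ Pi n)
    (t : ℝ) (ht0 : 0 < t) (ht1 : t < 1) (m : ℕ) :
    stabSet Φ (fun i => t • u i + (1 - t) • v i) m = stabSet Φ u m ∩ stabSet Φ v m := by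
  obtain ⟨f, hf⟩ := exists_linearMap_eq_one hind
  have hPi : ∀ x ∈ Pi, 0 < f x := fun x hx => by simp [hf ⟨x, hx⟩]
  have hsign : ∀ α ∈ Φ, (α ∈ posCone Pi → 0 < f α) ∧ (-α ∈ posCone Pi → f α < 0) := by
    intro α hα
    have hα0 : α ≠ 0 := fun h => h0 (h ▸ hα)
    exact ⟨fun h => map_pos_of_mem_posCone hPi h hα0,
      fun h => by simpa using map_pos_of_mem_posCone hPi h (neg_ne_zero.2 hα0)⟩
  have hΦ : IsOrderedRootSystem Φ f := ⟨hfin, hrefl, hred, fun α hα =>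
    (hsplit α hα).elim (fun h => ((hsign α hα).1 h).ne') fun h => ((hsign α hα).2 h).ne⟩
  have hpos : ∀ α ∈ Φ, 0 < f α → α ∈ posCone Pi := fun α hα hfα =>
    (hsplit α hα).resolve_right fun h => ((hsign α hα).2 h).not_gt hfα
  exact ((stabSet_subset_Wgroup_jointOrthRoots hΦ hpos hu hv ht0 ht1 m).trans
    (Wgroup_jointOrthRoots_subset m)).antisymm (stabSet_inter_subset_stabSet_add t (1 - t) m)

/-- For `u, v ∈ C⁽ⁿ⁾` and `0 < t < 1`, the pointwise stabilizer of the first `m`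
coordinates of `t u + (1 - t) v` is the intersection of those of `u` and of `v`. -/
theorem stab_of_convex_combination (Φ : Set V) (Pi : Finset V)
    (hfin : Φ.Finite) (h0 : (0 : V) ∉ Φ)
    (hrefl : ∀ α ∈ Φ, ∀ β ∈ Φ, sref α β ∈ Φ)
    (hred : ∀ α ∈ Φ, ∀ c : ℝ, c • α ∈ Φ → c = 1 ∨ c = -1)
    (hPiΦ : (Pi : Set V) ⊆ Φ)
    (hind : LinearIndependent ℝ (fun x : {x : V // x ∈ Pi} => (x : V)))
    (hsplit : ∀ β ∈ Φ, β ∈ posCone Pi ∨ -β ∈ posCone Pi)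
    (n : ℕ) (u v : Fin n → V) (hu : u ∈ Cfund Φ Pi n) (hv : v ∈ Cfund Φ Pi n)
    (t : ℝ) (ht0 : 0 < t) (ht1 : t < 1) (m : ℕ) (hm : m ≤ n) :
    stabSet Φ (fun i => t • u i + (1 - t) • v i) m = stabSet Φ u m ∩ stabSet Φ v m :=
  stab_of_convex_combination_general Φ Pi hfin h0 hrefl hred hind hsplit n u v hu hv t ht0 ht1 m
end
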